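/- arXiv:1206.4354 — 3 statements merged into one kernel-verified Lean document; each statement's English description precedes it below -/
import Mathlib

section
/- Let A and B be small categories and let ⊠ : Psh(A) × Psh(B) → Psh(A×B) be the external product (X ⊠ Y)_{a,b} = X_a × Y_b, with right adjoints X\(−) and (−)/Y. Then for a morphism u of Psh(A), a morphism v of Psh(B), and a morphism f of Psh(A×B), the following are equivalent: (u ⊠' v) ⊥ f, u ⊥ ⟨f/v⟩, and v ⊥ ⟨u\f⟩. -/
open CategoryTheory CategoryTheory.Limits Opposite

namespace Paper

variable {A : Type} [SmallCategory A] {B : Type} [SmallCategory B]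

/-- The external product `X ⊠ Y` of presheaves: `(X ⊠ Y)_{a,b} = X_a × Y_b`. -/
@[simps]
def extProd (X : Aᵒᵖ ⥤ Type) (Y : Bᵒᵖ ⥤ Type) : (A × B)ᵒᵖ ⥤ Type where
  obj ab := X.obj (op ab.unop.1) × Y.obj (op ab.unop.2)
  map f := TypeCat.ofHom fun p => (X.map f.unop.1.op p.1, Y.map f.unop.2.op p.2)

/-- Functoriality of the external product. -/
@[simps]
def extProdMap {X X' : Aᵒᵖ ⥤ Type} {Y Y' : Bᵒᵖ ⥤ Type} (u : X ⟶ X') (v : Y ⟶ Y') :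
    extProd X Y ⟶ extProd X' Y' where
  app ab := TypeCat.ofHom fun p => (u.app _ p.1, v.app _ p.2)
  naturality ab ab' f := by
    refine ConcreteCategory.hom_ext _ _ fun p => ?_
    change (u.app _ (X.map f.unop.1.op p.1), v.app _ (Y.map f.unop.2.op p.2)) =
      (X'.map f.unop.1.op (u.app _ p.1), Y'.map f.unop.2.op (v.app _ p.2))
    rw [FunctorToTypes.naturality, FunctorToTypes.naturality]

lemma extProdMap_id (X : Aᵒᵖ ⥤ Type) (Y : Bᵒᵖ ⥤ Type) :
    extProdMap (𝟙 X) (𝟙 Y) = 𝟙 (extProd X Y) := rfl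

lemma extProdMap_comp {X X' X'' : Aᵒᵖ ⥤ Type} {Y Y' Y'' : Bᵒᵖ ⥤ Type}
    (u : X ⟶ X') (u' : X' ⟶ X'') (v : Y ⟶ Y') (v' : Y' ⟶ Y'') :
    extProdMap (u ≫ u') (v ≫ v') = extProdMap u v ≫ extProdMap u' v' := rfl

lemma extProdMap_comp_right (X : Aᵒᵖ ⥤ Type) {Y Y' Y'' : Bᵒᵖ ⥤ Type}
    (v : Y ⟶ Y') (v' : Y' ⟶ Y'') :
    extProdMap (𝟙 X) (v ≫ v') = extProdMap (𝟙 X) v ≫ extProdMap (𝟙 X) v' := by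
  rw [← extProdMap_comp, Category.id_comp]

lemma extProdMap_comp_left {X X' X'' : Aᵒᵖ ⥤ Type} (u : X ⟶ X') (u' : X' ⟶ X'')
    (Y : Bᵒᵖ ⥤ Type) :
    extProdMap (u ≫ u') (𝟙 Y) = extProdMap u (𝟙 Y) ≫ extProdMap u' (𝟙 Y) := by
  rw [← extProdMap_comp, Category.id_comp]

/-- The pushout-product `u ⊠' v : U ⊠ T ⊔_{U ⊠ S} V ⊠ S → V ⊠ T`. -/
noncomputable def pushoutProduct {U V : Aᵒᵖ ⥤ Type} {S T : Bᵒᵖ ⥤ Type}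
    (u : U ⟶ V) (v : S ⟶ T) :
    pushout (extProdMap (𝟙 U) v) (extProdMap u (𝟙 S)) ⟶ extProd V T :=
  pushout.desc (extProdMap u (𝟙 T)) (extProdMap (𝟙 V) v)
    (by rw [← extProdMap_comp, ← extProdMap_comp, Category.id_comp, Category.id_comp,
      Category.comp_id, Category.comp_id])

/-- `U \ X`, the presheaf on `B` with `(U\X)_b = Hom(U ⊠ b, X)`. -/
@[simps]
def bs (U : Aᵒᵖ ⥤ Type) (X : (A × B)ᵒᵖ ⥤ Type) : Bᵒᵖ ⥤ Type where
  obj b := extProd U (yoneda.obj b.unop) ⟶ X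
  map g := TypeCat.ofHom fun φ => extProdMap (𝟙 U) (yoneda.map g.unop) ≫ φ
  map_id b := by
    refine ConcreteCategory.hom_ext _ _ fun φ => ?_
    dsimp
    rw [CategoryTheory.Functor.map_id, extProdMap_id, Category.id_comp]
  map_comp g h := by
    refine ConcreteCategory.hom_ext _ _ fun φ => ?_
    dsimp
    rw [CategoryTheory.Functor.map_comp, extProdMap_comp_right, Category.assoc]

/-- `X / S`, the presheaf on `A` with `(X/S)_a = Hom(a ⊠ S, X)`. -/
@[simps]
def sl (X : (A × B)ᵒᵖ ⥤ Type) (S : Bᵒᵖ ⥤ Type) : Aᵒᵖ ⥤ Type where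
  obj a := extProd (yoneda.obj a.unop) S ⟶ X
  map g := TypeCat.ofHom fun φ => extProdMap (yoneda.map g.unop) (𝟙 S) ≫ φ
  map_id a := by
    refine ConcreteCategory.hom_ext _ _ fun φ => ?_
    dsimp
    rw [CategoryTheory.Functor.map_id, extProdMap_id, Category.id_comp]
  map_comp g h := by
    refine ConcreteCategory.hom_ext _ _ fun φ => ?_
    dsimp
    rw [CategoryTheory.Functor.map_comp, extProdMap_comp_left, Category.assoc]

/-- Contravariant functoriality of `U \ X` in `U`. -/
@[simps]
def bsMapLeft {U V : Aᵒᵖ ⥤ Type} (u : U ⟶ V) (X : (A × B)ᵒᵖ ⥤ Type) :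
    bs V X ⟶ bs U X where
  app b := TypeCat.ofHom fun φ => extProdMap u (𝟙 _) ≫ φ
  naturality b b' g := by
    refine ConcreteCategory.hom_ext _ _ fun φ => ?_
    change extProd V (yoneda.obj b.unop) ⟶ X at φ
    change extProdMap u (𝟙 _) ≫ (extProdMap (𝟙 V) (yoneda.map g.unop) ≫ φ) =
      extProdMap (𝟙 U) (yoneda.map g.unop) ≫ (extProdMap u (𝟙 _) ≫ φ)
    rw [← Category.assoc, ← Category.assoc, ← extProdMap_comp, ← extProdMap_comp,
      Category.id_comp, Category.comp_id, Category.id_comp, Category.comp_id]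

/-- Covariant functoriality of `U \ X` in `X`. -/
@[simps]
def bsMapRight (U : Aᵒᵖ ⥤ Type) {X Y : (A × B)ᵒᵖ ⥤ Type} (f : X ⟶ Y) :
    bs U X ⟶ bs U Y where
  app b := TypeCat.ofHom fun φ => φ ≫ f
  naturality b b' g := by
    refine ConcreteCategory.hom_ext _ _ fun φ => ?_
    change extProd U (yoneda.obj b.unop) ⟶ X at φ
    change (extProdMap (𝟙 U) (yoneda.map g.unop) ≫ φ) ≫ f =
      extProdMap (𝟙 U) (yoneda.map g.unop) ≫ (φ ≫ f)
    rw [Category.assoc]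

/-- Contravariant functoriality of `X / S` in `S`. -/
@[simps]
def slMapLeft {S T : Bᵒᵖ ⥤ Type} (v : S ⟶ T) (X : (A × B)ᵒᵖ ⥤ Type) :
    sl X T ⟶ sl X S where
  app a := TypeCat.ofHom fun φ => extProdMap (𝟙 _) v ≫ φ
  naturality a a' g := by
    refine ConcreteCategory.hom_ext _ _ fun φ => ?_
    change extProd (yoneda.obj a.unop) T ⟶ X at φ
    change extProdMap (𝟙 _) v ≫ (extProdMap (yoneda.map g.unop) (𝟙 T) ≫ φ) =
      extProdMap (yoneda.map g.unop) (𝟙 S) ≫ (extProdMap (𝟙 _) v ≫ φ)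
    rw [← Category.assoc, ← Category.assoc, ← extProdMap_comp, ← extProdMap_comp,
      Category.id_comp, Category.comp_id, Category.id_comp, Category.comp_id]

/-- Covariant functoriality of `X / S` in `X`. -/
@[simps]
def slMapRight {X Y : (A × B)ᵒᵖ ⥤ Type} (f : X ⟶ Y) (S : Bᵒᵖ ⥤ Type) :
    sl X S ⟶ sl Y S where
  app a := TypeCat.ofHom fun φ => φ ≫ f
  naturality a a' g := by
    refine ConcreteCategory.hom_ext _ _ fun φ => ?_
    change extProd (yoneda.obj a.unop) S ⟶ X at φ
    change (extProdMap (yoneda.map g.unop) (𝟙 S) ≫ φ) ≫ f =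
      extProdMap (yoneda.map g.unop) (𝟙 S) ≫ (φ ≫ f)
    rw [Category.assoc]

/-- The pullback-hom `⟨u \ f⟩ : V\X ⟶ V\Y ×_{U\Y} U\X`. -/
noncomputable def bsCorner {U V : Aᵒᵖ ⥤ Type} {X Y : (A × B)ᵒᵖ ⥤ Type}
    (u : U ⟶ V) (f : X ⟶ Y) :
    bs V X ⟶ pullback (bsMapLeft u Y) (bsMapRight U f) :=
  pullback.lift (bsMapRight V f) (bsMapLeft u X) (by
    refine NatTrans.ext (funext fun b => ?_)
    refine ConcreteCategory.hom_ext _ _ fun φ => ?_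
    change extProd V (yoneda.obj b.unop) ⟶ X at φ
    change extProdMap u (𝟙 _) ≫ (φ ≫ f) = (extProdMap u (𝟙 _) ≫ φ) ≫ f
    rw [Category.assoc])

/-- The pullback-hom `⟨f / v⟩ : X/T ⟶ Y/T ×_{Y/S} X/S`. -/
noncomputable def slCorner {X Y : (A × B)ᵒᵖ ⥤ Type} {S T : Bᵒᵖ ⥤ Type}
    (f : X ⟶ Y) (v : S ⟶ T) :
    sl X T ⟶ pullback (slMapLeft v Y) (slMapRight f S) :=
  pullback.lift (slMapRight f T) (slMapLeft v X) (by
    refine NatTrans.ext (funext fun a => ?_)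
    refine ConcreteCategory.hom_ext _ _ fun φ => ?_
    change extProd (yoneda.obj a.unop) T ⟶ X at φ
    change extProdMap (𝟙 _) v ≫ (φ ≫ f) = (extProdMap (𝟙 _) v ≫ φ) ≫ f
    rw [Category.assoc])

end Paper

/-!
For fixed `S`, currying through the Yoneda lemma identifies `W ⊠ S ⟶ X` with `W ⟶ X/S`, and for
fixed `U` it identifies `U ⊠ Z ⟶ X` with `Z ⟶ U\X`, naturally in all variables including the
parameter. So `⊠` is left adjoint to `(−)/(−)` and to `(−)\(−)` as bifunctors with a parameter,
and for any such parametrized adjunction the commutative squares from the Leibniz pushout to `f`,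
and their diagonal fillers, correspond bijectively to squares (and fillers) from the remaining
factor to the Leibniz pullback.
-/

namespace Paper

variable {A : Type} [SmallCategory A] {B : Type} [SmallCategory B]

def extProdFunctor : (Aᵒᵖ ⥤ Type) ⥤ (Bᵒᵖ ⥤ Type) ⥤ ((A × B)ᵒᵖ ⥤ Type) where
  obj X := { obj := extProd X, map := extProdMap (𝟙 X) }
  map u := { app := fun Y => extProdMap u (𝟙 Y) }

def slFunctor : (Bᵒᵖ ⥤ Type)ᵒᵖ ⥤ ((A × B)ᵒᵖ ⥤ Type) ⥤ (Aᵒᵖ ⥤ Type) where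
  obj S := { obj := fun X => sl X S.unop, map := fun f => slMapRight f S.unop }
  map v := { app := fun X => slMapLeft v.unop X }

def bsFunctor : (Aᵒᵖ ⥤ Type)ᵒᵖ ⥤ ((A × B)ᵒᵖ ⥤ Type) ⥤ (Bᵒᵖ ⥤ Type) where
  obj U := { obj := fun X => bs U.unop X, map := fun f => bsMapRight U.unop f }
  map u := { app := fun X => bsMapLeft u.unop X }

section Currying

variable {U W : Aᵒᵖ ⥤ Type} {S Z : Bᵒᵖ ⥤ Type} {X : (A × B)ᵒᵖ ⥤ Type}

def slCurry (φ : extProd W S ⟶ X) : W ⟶ sl X S where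
  app a := TypeCat.ofHom fun w =>
    { app := fun ab => TypeCat.ofHom fun gs => φ.app ab (W.map gs.1.op w, gs.2)
      naturality := fun ab ab' h => by
        refine ConcreteCategory.hom_ext _ _ fun gs => ?_
        change φ.app ab' (W.map (gs.1.op ≫ h.unop.1.op) w, S.map h.unop.2.op gs.2) =
          X.map h (φ.app ab (W.map gs.1.op w, gs.2))
        rw [Functor.map_comp_apply]
        exact NatTrans.naturality_apply (D := Type) φ h
          ((W.map gs.1.op w, gs.2) : W.obj (op ab.unop.1) × S.obj (op ab.unop.2)) }
  naturality a a' k := by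
    refine ConcreteCategory.hom_ext _ _ fun w => ?_
    apply NatTrans.ext
    funext ab
    refine ConcreteCategory.hom_ext _ _ fun gs => ?_
    change φ.app ab (W.map gs.1.op (W.map k w), gs.2) = φ.app ab (W.map (k ≫ gs.1.op) w, gs.2)
    rw [Functor.map_comp_apply]

def slUncurry (ψ : W ⟶ sl X S) : extProd W S ⟶ X where
  app ab := TypeCat.ofHom fun ws => NatTrans.app (ψ.app (op ab.unop.1) ws.1) ab (𝟙 _, ws.2)
  naturality ab ab' h := by
    refine ConcreteCategory.hom_ext _ _ fun ws => ?_
    change NatTrans.app (ψ.app (op ab'.unop.1) (W.map h.unop.1.op ws.1)) ab'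
        (𝟙 _, S.map h.unop.2.op ws.2) =
      X.map h (NatTrans.app (ψ.app (op ab.unop.1) ws.1) ab (𝟙 _, ws.2))
    rw [NatTrans.naturality_apply ψ h.unop.1.op ws.1]
    refine Eq.trans ?_ (NatTrans.naturality_apply (D := Type)
      (ψ.app (op ab.unop.1) ws.1 : extProd (yoneda.obj ab.unop.1) S ⟶ X) h
      ((𝟙 _, ws.2) : (ab.unop.1 ⟶ ab.unop.1) × S.obj (op ab.unop.2)))
    change NatTrans.app (ψ.app (op ab.unop.1) ws.1) ab' (𝟙 _ ≫ h.unop.1, S.map h.unop.2.op ws.2) =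
      NatTrans.app (ψ.app (op ab.unop.1) ws.1) ab' (h.unop.1 ≫ 𝟙 _, S.map h.unop.2.op ws.2)
    rw [Category.id_comp, Category.comp_id]

def slHomEquiv (W : Aᵒᵖ ⥤ Type) (S : Bᵒᵖ ⥤ Type) (X : (A × B)ᵒᵖ ⥤ Type) :
    (extProd W S ⟶ X) ≃ (W ⟶ sl X S) where
  toFun := slCurry
  invFun := slUncurry
  left_inv φ := by
    apply NatTrans.ext
    funext ab
    refine ConcreteCategory.hom_ext _ _ fun ws => ?_
    change φ.app ab (W.map (𝟙 _) ws.1, ws.2) = _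
    rw [Functor.map_id_apply]
    rfl
  right_inv ψ := by
    apply NatTrans.ext
    funext a
    refine ConcreteCategory.hom_ext _ _ fun w => ?_
    apply NatTrans.ext
    funext ab
    refine ConcreteCategory.hom_ext _ _ fun gs => ?_
    change NatTrans.app (ψ.app (op ab.unop.1) (W.map gs.1.op w)) ab (𝟙 _, gs.2) = _
    rw [NatTrans.naturality_apply ψ gs.1.op w]
    change NatTrans.app (ψ.app a w) ab (𝟙 _ ≫ gs.1, gs.2) =
      NatTrans.app (ψ.app a w) ab (gs.1, gs.2)
    rw [Category.id_comp]

def bsCurry (φ : extProd U Z ⟶ X) : Z ⟶ bs U X where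
  app b := TypeCat.ofHom fun z =>
    { app := fun ab => TypeCat.ofHom fun pg => φ.app ab (pg.1, Z.map pg.2.op z)
      naturality := fun ab ab' h => by
        refine ConcreteCategory.hom_ext _ _ fun pg => ?_
        change φ.app ab' (U.map h.unop.1.op pg.1, Z.map (pg.2.op ≫ h.unop.2.op) z) =
          X.map h (φ.app ab (pg.1, Z.map pg.2.op z))
        rw [Functor.map_comp_apply]
        exact NatTrans.naturality_apply (D := Type) φ h
          ((pg.1, Z.map pg.2.op z) : U.obj (op ab.unop.1) × Z.obj (op ab.unop.2)) }
  naturality b b' k := by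
    refine ConcreteCategory.hom_ext _ _ fun z => ?_
    apply NatTrans.ext
    funext ab
    refine ConcreteCategory.hom_ext _ _ fun pg => ?_
    change φ.app ab (pg.1, Z.map pg.2.op (Z.map k z)) = φ.app ab (pg.1, Z.map (k ≫ pg.2.op) z)
    rw [Functor.map_comp_apply]

def bsUncurry (ψ : Z ⟶ bs U X) : extProd U Z ⟶ X where
  app ab := TypeCat.ofHom fun uz => NatTrans.app (ψ.app (op ab.unop.2) uz.2) ab (uz.1, 𝟙 _)
  naturality ab ab' h := by
    refine ConcreteCategory.hom_ext _ _ fun uz => ?_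
    change NatTrans.app (ψ.app (op ab'.unop.2) (Z.map h.unop.2.op uz.2)) ab'
        (U.map h.unop.1.op uz.1, 𝟙 _) =
      X.map h (NatTrans.app (ψ.app (op ab.unop.2) uz.2) ab (uz.1, 𝟙 _))
    rw [NatTrans.naturality_apply ψ h.unop.2.op uz.2]
    refine Eq.trans ?_ (NatTrans.naturality_apply (D := Type)
      (ψ.app (op ab.unop.2) uz.2 : extProd U (yoneda.obj ab.unop.2) ⟶ X) h
      ((uz.1, 𝟙 _) : U.obj (op ab.unop.1) × (ab.unop.2 ⟶ ab.unop.2)))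
    change NatTrans.app (ψ.app (op ab.unop.2) uz.2) ab' (U.map h.unop.1.op uz.1, 𝟙 _ ≫ h.unop.2) =
      NatTrans.app (ψ.app (op ab.unop.2) uz.2) ab' (U.map h.unop.1.op uz.1, h.unop.2 ≫ 𝟙 _)
    rw [Category.id_comp, Category.comp_id]

def bsHomEquiv (U : Aᵒᵖ ⥤ Type) (Z : Bᵒᵖ ⥤ Type) (X : (A × B)ᵒᵖ ⥤ Type) :
    (extProd U Z ⟶ X) ≃ (Z ⟶ bs U X) where
  toFun := bsCurry
  invFun := bsUncurry
  left_inv φ := by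
    apply NatTrans.ext
    funext ab
    refine ConcreteCategory.hom_ext _ _ fun uz => ?_
    change φ.app ab (uz.1, Z.map (𝟙 _) uz.2) = _
    rw [Functor.map_id_apply]
    rfl
  right_inv ψ := by
    apply NatTrans.ext
    funext b
    refine ConcreteCategory.hom_ext _ _ fun z => ?_
    apply NatTrans.ext
    funext ab
    refine ConcreteCategory.hom_ext _ _ fun pg => ?_
    change NatTrans.app (ψ.app (op ab.unop.2) (Z.map pg.2.op z)) ab (pg.1, 𝟙 _) = _
    rw [NatTrans.naturality_apply ψ pg.2.op z]
    change NatTrans.app (ψ.app b z) ab (pg.1, 𝟙 _ ≫ pg.2) =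
      NatTrans.app (ψ.app b z) ab (pg.1, pg.2)
    rw [Category.id_comp]

end Currying

-- All the naturality conditions hold definitionally for the explicit curryings above.
noncomputable def extProdSlAdjunction (S : Bᵒᵖ ⥤ Type) :
    extProdFunctor.flip.obj S ⊣ (slFunctor (A := A)).obj (op S) :=
  Adjunction.mkOfHomEquiv
    { homEquiv := fun W X => slHomEquiv W S X
      homEquiv_naturality_left_symm := fun _ _ => rfl
      homEquiv_naturality_right := fun _ _ => rfl }

noncomputable def extProdBsAdjunction (U : Aᵒᵖ ⥤ Type) :
    extProdFunctor.obj U ⊣ (bsFunctor (B := B)).obj (op U) :=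
  Adjunction.mkOfHomEquiv
    { homEquiv := fun Z X => bsHomEquiv U Z X
      homEquiv_naturality_left_symm := fun _ _ => rfl
      homEquiv_naturality_right := fun _ _ => rfl }

noncomputable def extProdSlParametrizedAdjunction :
    (extProdFunctor (A := A) (B := B)).flip ⊣₂ slFunctor :=
  .mk' extProdSlAdjunction fun _ _ _ _ => rfl

noncomputable def extProdBsParametrizedAdjunction :
    (extProdFunctor (A := A) (B := B)) ⊣₂ bsFunctor :=
  .mk' extProdBsAdjunction fun _ _ _ _ => rfl

-- `pushoutProduct` and the two corners use the legs in the opposite order to Mathlib's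
-- `PushoutObjObj` / `PullbackObjObj`, hence the swapped inclusions and projections.
noncomputable def pushoutProductObjObj {U V : Aᵒᵖ ⥤ Type} {S T : Bᵒᵖ ⥤ Type}
    (u : U ⟶ V) (v : S ⟶ T) : extProdFunctor.PushoutObjObj u v where
  pt := pushout (extProdMap (𝟙 U) v) (extProdMap u (𝟙 S))
  inl := pushout.inr _ _
  inr := pushout.inl _ _
  isPushout := (IsPushout.of_hasPushout _ _).flip
  ι := pushoutProduct u v
  inl_ι := pushout.inr_desc _ _ _
  inr_ι := pushout.inl_desc _ _ _

noncomputable def slCornerObjObj {X Y : (A × B)ᵒᵖ ⥤ Type} {S T : Bᵒᵖ ⥤ Type}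
    (f : X ⟶ Y) (v : S ⟶ T) : slFunctor.PullbackObjObj v f where
  pt := pullback (slMapLeft v Y) (slMapRight f S)
  fst := pullback.snd _ _
  snd := pullback.fst _ _
  isPullback := (IsPullback.of_hasPullback _ _).flip
  π := slCorner f v
  π_fst := pullback.lift_snd _ _ _
  π_snd := pullback.lift_fst _ _ _

noncomputable def bsCornerObjObj {U V : Aᵒᵖ ⥤ Type} {X Y : (A × B)ᵒᵖ ⥤ Type}
    (u : U ⟶ V) (f : X ⟶ Y) : bsFunctor.PullbackObjObj u f where
  pt := pullback (bsMapLeft u Y) (bsMapRight U f)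
  fst := pullback.snd _ _
  snd := pullback.fst _ _
  isPullback := (IsPullback.of_hasPullback _ _).flip
  π := bsCorner u f
  π_fst := pullback.lift_snd _ _ _
  π_snd := pullback.lift_fst _ _ _

end Paper

open Paper CategoryTheory in
/-- For `u` in `Psh(A)`, `v` in `Psh(B)` and `f` in `Psh(A × B)`, the lifting properties
`(u ⊠' v) ⊥ f`, `u ⊥ ⟨f/v⟩` and `v ⊥ ⟨u\f⟩` are equivalent. -/
theorem stmt2 {A : Type} [SmallCategory A] {B : Type} [SmallCategory B]
    {U V : Aᵒᵖ ⥤ Type} {S T : Bᵒᵖ ⥤ Type} {X Y : (A × B)ᵒᵖ ⥤ Type}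
    (u : U ⟶ V) (v : S ⟶ T) (f : X ⟶ Y) :
    (HasLiftingProperty (pushoutProduct u v) f ↔ HasLiftingProperty u (slCorner f v)) ∧
    (HasLiftingProperty u (slCorner f v) ↔ HasLiftingProperty v (bsCorner u f)) := by
  have hsl := extProdSlParametrizedAdjunction.hasLiftingProperty_iff
    (pushoutProductObjObj u v).flip (slCornerObjObj f v)
  have hbs := extProdBsParametrizedAdjunction.hasLiftingProperty_iff
    (pushoutProductObjObj u v) (bsCornerObjObj u f)
  exact ⟨hsl, hsl.symm.trans hbs⟩
end

section
/- Let A be a small category and W an accessible A-localizer, giving a model structure on presheaves on A with cofibrations the monomorphisms and weak equivalences W. Then W is closed under binary products if and only if the class of monomorphisms belonging to W is closed under binary products, if and only if the pushout-product of a cofibration with a trivial cofibration is a trivial cofibration (i.e., the model structure is cartesian). -/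
open CategoryTheory CategoryTheory.Limits

universe w v u

namespace Paper

variable {M : Type u} [Category.{v} M]

/-- The class of morphisms with the left lifting property with respect to every morphism in `C`. -/
def llp (C : MorphismProperty M) : MorphismProperty M :=
  fun _ _ i => ∀ ⦃Z T : M⦄ (p : Z ⟶ T), C p → HasLiftingProperty i p

/-- The class of morphisms with the right lifting property with respect to every morphism in `C`. -/
def rlp (C : MorphismProperty M) : MorphismProperty M :=
  fun _ _ p => ∀ ⦃U V : M⦄ (i : U ⟶ V), C i → HasLiftingProperty i p

/-- Stability under retracts (in the arrow category). -/
def StableUnderRetracts (P : MorphismProperty M) : Prop :=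
  ∀ ⦃X Y X' Y' : M⦄ (f : X ⟶ Y) (f' : X' ⟶ Y')
    (i : Arrow.mk f' ⟶ Arrow.mk f) (r : Arrow.mk f ⟶ Arrow.mk f'),
      i ≫ r = 𝟙 _ → P f → P f'

/-- The restriction of a transfinite sequence to the indices below `b`. -/
def restrictionLT {β : Type w} [Preorder β] (F : β ⥤ M) (b : β) : {i : β // i < b} ⥤ M :=
  (Monotone.functor (f := fun i : {i : β // i < b} => (i : β)) fun _ _ h => h) ⋙ F

/-- The cocone over the restriction of `F` to indices `< b`, with apex `F.obj b`. -/
@[simps]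
def coconeLT {β : Type w} [Preorder β] (F : β ⥤ M) (b : β) :
    Cocone (restrictionLT F b) where
  pt := F.obj b
  ι :=
    { app := fun i => F.map (homOfLE i.2.le)
      naturality := fun i j g => by
        dsimp [restrictionLT, Monotone.functor]
        rw [Category.comp_id, ← F.map_comp]
        congr 1 }

/-- A class of morphisms is stable under transfinite composition if, for every
well-ordered continuous sequence whose successor maps lie in `P`, the canonical map from the
first object to a colimit of the sequence lies in `P`. -/
def StableUnderTransfiniteComposition (P : MorphismProperty M) : Prop :=
  ∀ (β : Type w) (_ : LinearOrder β) (_ : OrderBot β) (_ : SuccOrder β)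
    (_ : WellFoundedLT β) (F : β ⥤ M),
    (∀ b : β, Order.IsSuccLimit b → Nonempty (IsColimit (coconeLT F b))) →
    (∀ b : β, ¬IsMax b → P (F.map (homOfLE (Order.le_succ b)))) →
    ∀ (c : Cocone F), IsColimit c → P (c.ι.app ⊥)

/-- Trivial fibrations: morphisms with the right lifting property with respect to all
monomorphisms. -/
def IsTrivFib {X Y : M} (f : X ⟶ Y) : Prop :=
  ∀ ⦃U V : M⦄ (i : U ⟶ V), Mono i → HasLiftingProperty i f

end Paper

namespace Paper

open CategoryTheory CategoryTheory.Limits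

/-- An `A`-localizer: a class of morphisms of presheaves on `A` satisfying 2-out-of-3,
containing the trivial fibrations, and whose monomorphism members are stable under
pushout and transfinite composition. -/
structure IsLocalizer {A : Type} [SmallCategory A] (W : MorphismProperty (Aᵒᵖ ⥤ Type)) :
    Prop where
  two_out_of_three : W.HasTwoOutOfThreeProperty
  trivFib_mem : ∀ ⦃X Y : Aᵒᵖ ⥤ Type⦄ (f : X ⟶ Y), IsTrivFib f → W f
  pushout_stable : ∀ ⦃Z X Y P : Aᵒᵖ ⥤ Type⦄ (s : Z ⟶ X) (f : Z ⟶ Y) (f' : X ⟶ P) (t : Y ⟶ P),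
    IsPushout s f f' t → Mono f → W f → W f'
  transfinite_stable :
    StableUnderTransfiniteComposition.{0} (MorphismProperty.monomorphisms _ ⊓ W)

/-- A model category structure on a category `M`: classes of weak equivalences,
cofibrations and fibrations satisfying Quillen's axioms. -/
structure ModelStruct (M : Type u) [Category.{v} M] where
  W : MorphismProperty M
  Cof : MorphismProperty M
  Fib : MorphismProperty M
  w_two_out_of_three : W.HasTwoOutOfThreeProperty
  w_retract : StableUnderRetracts W
  cof_retract : StableUnderRetracts Cof
  fib_retract : StableUnderRetracts Fib
  lift_trivCof_fib : ∀ ⦃U V X Y : M⦄ (i : U ⟶ V) (p : X ⟶ Y),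
    Cof i → W i → Fib p → HasLiftingProperty i p
  lift_cof_trivFib : ∀ ⦃U V X Y : M⦄ (i : U ⟶ V) (p : X ⟶ Y),
    Cof i → Fib p → W p → HasLiftingProperty i p
  fact_trivCof_fib : ∀ ⦃X Y : M⦄ (f : X ⟶ Y),
    ∃ (Z : M) (i : X ⟶ Z) (p : Z ⟶ Y), Cof i ∧ W i ∧ Fib p ∧ i ≫ p = f
  fact_cof_trivFib : ∀ ⦃X Y : M⦄ (f : X ⟶ Y),
    ∃ (Z : M) (i : X ⟶ Z) (p : Z ⟶ Y), Cof i ∧ Fib p ∧ W p ∧ i ≫ p = f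

/-- An object is fibrant if its map to the terminal object is a fibration. -/
def ModelStruct.Fibrant {M : Type u} [Category.{v} M] [HasTerminal M]
    (σ : ModelStruct M) (X : M) : Prop :=
  σ.Fib (terminal.from X)

/-- The statement that an accessible localizer `W` underlies a (cofibrantly generated) model
structure on presheaves whose cofibrations are the monomorphisms; by a theorem of Cisinski
this is equivalent to accessibility of `W`. -/
def IsAccessibleLocalizer {A : Type} [SmallCategory A]
    (W : MorphismProperty (Aᵒᵖ ⥤ Type)) : Prop :=
  IsLocalizer W ∧
    ∃ σ : ModelStruct (Aᵒᵖ ⥤ Type), σ.W = W ∧ σ.Cof = MorphismProperty.monomorphisms _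

end Paper

namespace Paper

open CategoryTheory CategoryTheory.Limits

variable {A : Type} [SmallCategory A]

/-- The pushout-product (corner map) `U × T ⊔_{U × S} V × S ⟶ V × T` of two morphisms of
presheaves. -/
noncomputable def prodCorner {U V S T : Aᵒᵖ ⥤ Type} (u : U ⟶ V) (v : S ⟶ T) :
    pushout (prod.map (𝟙 U) v) (prod.map u (𝟙 S)) ⟶ V ⨯ T :=
  pushout.desc (prod.map u (𝟙 T)) (prod.map (𝟙 V) v)
    (by rw [prod.map_map, prod.map_map]; simp)

end Paper

/-!
Every morphism factors as a monomorphism followed by a trivial fibration; trivial fibrations lie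
in `W` and are stable under products, so by 2-out-of-3 closure of `W` under products reduces to
that of the trivial cofibrations.

The pushout-product of two monomorphisms is a monomorphism because presheaf categories are
adhesive: it is the map to `V × T` from the union of its subobjects `U × T` and `V × S` over their
intersection `U × S`. If trivial cofibrations are stable under products, then `V × v` is the
corner map precomposed with a pushout of the trivial cofibration `U × v`, so the corner map lies
in `W` by 2-out-of-3. Conversely, the corner map of `⊥ ⟶ X` and `v` is `X × v` up to
isomorphism, and `f × g = (X × g) ≫ (f × Y')`, where `f × Y'` is conjugate to `Y' × f` by the
braiding.
-/

namespace Paper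

open CategoryTheory CategoryTheory.Limits MorphismProperty

section General

variable {C : Type u} [Category.{v} C]

def StableUnderProdMap [HasBinaryProducts C] (W : MorphismProperty C) : Prop :=
  ∀ ⦃X Y X' Y' : C⦄ (f : X ⟶ Y) (g : X' ⟶ Y'), W f → W g → W (prod.map f g)

def MonoStableUnderProdMap [HasBinaryProducts C] (W : MorphismProperty C) : Prop :=
  ∀ ⦃X Y X' Y' : C⦄ (f : X ⟶ Y) (g : X' ⟶ Y'), Mono f → W f → Mono g → W g → W (prod.map f g)

lemma isTrivFib_prod_map [HasBinaryProducts C] {X Y X' Y' : C} {p : X ⟶ Y} {q : X' ⟶ Y'}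
    (hp : IsTrivFib p) (hq : IsTrivFib q) : IsTrivFib (prod.map p q) :=
  MorphismProperty.limMap (W := (monomorphisms C).rlp)
    (mapPair (F := pair X X') (G := pair Y Y') p q) (by rintro ⟨⟨⟩⟩; exacts [hp, hq])

lemma isPullback_prod_map [HasBinaryProducts C] {U V S T : C} (u : U ⟶ V) (v : S ⟶ T) :
    IsPullback (prod.map (𝟙 U) v) (prod.map u (𝟙 S)) (prod.map u (𝟙 T)) (prod.map (𝟙 V) v) :=
  IsPullback.of_right (by simpa using IsPullback.of_prod_fst_with_id u S) (by simp)
    (IsPullback.of_prod_fst_with_id u T)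

lemma Adhesive.mono_of_isPullback_of_isPushout [Adhesive C]
    {Z B₁ B₂ Y P : C} {s : Z ⟶ B₁} {t : Z ⟶ B₂} {m₁ : B₁ ⟶ Y} {m₂ : B₂ ⟶ Y}
    {i₁ : B₁ ⟶ P} {i₂ : B₂ ⟶ P} [Mono m₁] [Mono m₂]
    (hpb : IsPullback s t m₁ m₂) (hpo : IsPushout s t i₁ i₂)
    {d : P ⟶ Y} (h₁ : i₁ ≫ d = m₁) (h₂ : i₂ ≫ d = m₂) : Mono d := by
  have hpo' : IsPushout (pullback.fst m₁ m₂) (pullback.snd m₁ m₂) i₁ i₂ :=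
    hpo.of_iso hpb.isoPullback (Iso.refl _) (Iso.refl _) (Iso.refl _) (by simp) (by simp)
      (by simp) (by simp)
  have hd : d = hpo'.isoPushout.hom ≫ pushout.desc m₁ m₂ pullback.condition :=
    hpo'.hom_ext
      (by rw [hpo'.inl_isoPushout_hom_assoc, pushout.inl_desc, h₁])
      (by rw [hpo'.inr_isoPushout_hom_assoc, pushout.inr_desc, h₂])
  rw [hd]
  -- `Adhesive.desc_mono_of_mono` (Lack–Sobociński)
  infer_instance

lemma ModelStruct.exists_mono_isTrivFib_fac (σ : ModelStruct C) (hσ : σ.Cof = monomorphisms C)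
    {X Y : C} (f : X ⟶ Y) :
    ∃ (Z : C) (i : X ⟶ Z) (p : Z ⟶ Y), Mono i ∧ IsTrivFib p ∧ i ≫ p = f := by
  obtain ⟨Z, i, p, hi, hp, hWp, rfl⟩ := σ.fact_cof_trivFib f
  rw [hσ] at hi
  exact ⟨Z, i, p, hi, fun _ _ j hj => σ.lift_cof_trivFib j p (hσ ▸ hj) hp hWp, rfl⟩

end General

variable {A : Type} [SmallCategory A]

def PushoutProductStable (W : MorphismProperty (Aᵒᵖ ⥤ Type)) : Prop :=
  ∀ ⦃U V S T : Aᵒᵖ ⥤ Type⦄ (u : U ⟶ V) (v : S ⟶ T),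
    Mono u → Mono v → W v → Mono (prodCorner u v) ∧ W (prodCorner u v)

@[simp]
lemma inl_prodCorner {U V S T : Aᵒᵖ ⥤ Type} (u : U ⟶ V) (v : S ⟶ T) :
    pushout.inl _ _ ≫ prodCorner u v = prod.map u (𝟙 T) :=
  pushout.inl_desc _ _ _

@[simp]
lemma inr_prodCorner {U V S T : Aᵒᵖ ⥤ Type} (u : U ⟶ V) (v : S ⟶ T) :
    pushout.inr _ _ ≫ prodCorner u v = prod.map (𝟙 V) v :=
  pushout.inr_desc _ _ _

lemma mono_prodCorner {U V S T : Aᵒᵖ ⥤ Type} (u : U ⟶ V) (v : S ⟶ T) [Mono u] [Mono v] :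
    Mono (prodCorner u v) :=
  Adhesive.mono_of_isPullback_of_isPushout (isPullback_prod_map u v)
    (IsPushout.of_hasPushout _ _) (inl_prodCorner u v) (inr_prodCorner u v)

namespace IsLocalizer

variable {W : MorphismProperty (Aᵒᵖ ⥤ Type)}

lemma mem_of_isIso (hL : IsLocalizer W) {X Y : Aᵒᵖ ⥤ Type} (e : X ⟶ Y) [IsIso e] : W e :=
  hL.trivFib_mem e fun _ _ _ _ => inferInstance

lemma pushoutProductStable_of_monoStableUnderProdMap (hL : IsLocalizer W)
    (h : MonoStableUnderProdMap W) : PushoutProductStable W := by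
  intro U V S T u v hu hv hWv
  have := hL.two_out_of_three
  have hid (X : Aᵒᵖ ⥤ Type) : W (prod.map (𝟙 X) v) :=
    h _ _ inferInstance (hL.mem_of_isIso _) hv hWv
  have hinr : W (pushout.inr (prod.map (𝟙 U) v) (prod.map u (𝟙 S))) :=
    hL.pushout_stable _ _ _ _ (IsPushout.of_hasPushout _ _).flip inferInstance (hid U)
  refine ⟨mono_prodCorner u v, W.of_precomp _ _ hinr ?_⟩
  rw [inr_prodCorner]
  exact hid V

lemma prod_map_id_mem (hL : IsLocalizer W) (h : PushoutProductStable W) (X : Aᵒᵖ ⥤ Type)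
    {S T : Aᵒᵖ ⥤ Type} {v : S ⟶ T} (hv : Mono v) (hWv : W v) : W (prod.map (𝟙 X) v) := by
  have := hL.two_out_of_three
  have : IsIso (prod.map (𝟙 (⊥_ (Aᵒᵖ ⥤ Type))) v) :=
    IsIso.of_isIso_comp_right _ (prod.fst : _ ⨯ T ⟶ _)
  rw [← inr_prodCorner (initial.to X) v]
  exact W.comp_mem _ _ (hL.mem_of_isIso _) (h _ v inferInstance hv hWv).2

lemma monoStableUnderProdMap_of_pushoutProductStable (hL : IsLocalizer W)
    (h : PushoutProductStable W) : MonoStableUnderProdMap W := by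
  intro X Y X' Y' f g hf hWf hg hWg
  have := hL.two_out_of_three
  have hf' : W (prod.map f (𝟙 Y')) := by
    refine W.of_postcomp _ (prod.braiding Y Y').hom (hL.mem_of_isIso _) ?_
    rw [braid_natural]
    exact W.comp_mem _ _ (hL.mem_of_isIso _) (hL.prod_map_id_mem h Y' hf hWf)
  rw [show prod.map f g = prod.map (𝟙 X) g ≫ prod.map f (𝟙 Y') by simp]
  exact W.comp_mem _ _ (hL.prod_map_id_mem h X hg hWg) hf'

end IsLocalizer

lemma IsAccessibleLocalizer.stableUnderProdMap_of_monoStableUnderProdMap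
    {W : MorphismProperty (Aᵒᵖ ⥤ Type)} (hW : IsAccessibleLocalizer W)
    (h : MonoStableUnderProdMap W) : StableUnderProdMap W := by
  obtain ⟨hL, σ, -, hσ⟩ := hW
  have := hL.two_out_of_three
  intro X Y X' Y' f g hWf hWg
  obtain ⟨_, i, p, hi, hp, rfl⟩ := σ.exists_mono_isTrivFib_fac hσ f
  obtain ⟨_, j, q, hj, hq, rfl⟩ := σ.exists_mono_isTrivFib_fac hσ g
  have hWp := hL.trivFib_mem p hp
  have hWq := hL.trivFib_mem q hq
  rw [← prod.map_map]
  exact W.comp_mem _ _ (h i j hi (W.of_postcomp _ _ hWp hWf) hj (W.of_postcomp _ _ hWq hWg))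
    (hL.trivFib_mem _ (isTrivFib_prod_map hp hq))

end Paper

open Paper CategoryTheory CategoryTheory.Limits in
/-- For an accessible `A`-localizer `W`, the following are equivalent: `W` is closed under
binary products; monomorphisms belonging to `W` are closed under binary products; the
pushout-product of a cofibration (monomorphism) with a trivial cofibration (monomorphism in
`W`) is again a trivial cofibration (the model structure is cartesian). -/
theorem stmt3 {A : Type} [SmallCategory A] (W : MorphismProperty (Aᵒᵖ ⥤ Type))
    (hW : IsAccessibleLocalizer W) :
    ((∀ ⦃X Y X' Y' : Aᵒᵖ ⥤ Type⦄ (f : X ⟶ Y) (g : X' ⟶ Y'),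
        W f → W g → W (prod.map f g)) ↔
      (∀ ⦃X Y X' Y' : Aᵒᵖ ⥤ Type⦄ (f : X ⟶ Y) (g : X' ⟶ Y'),
        Mono f → W f → Mono g → W g → W (prod.map f g))) ∧
    ((∀ ⦃X Y X' Y' : Aᵒᵖ ⥤ Type⦄ (f : X ⟶ Y) (g : X' ⟶ Y'),
        Mono f → W f → Mono g → W g → W (prod.map f g)) ↔
      (∀ ⦃U V S T : Aᵒᵖ ⥤ Type⦄ (u : U ⟶ V) (v : S ⟶ T),
        Mono u → Mono v → W v → Mono (prodCorner u v) ∧ W (prodCorner u v))) := by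
  exact ⟨⟨fun h _ _ _ _ f g _ hf _ hg => h f g hf hg,
      hW.stableUnderProdMap_of_monoStableUnderProdMap⟩,
    hW.1.pushoutProductStable_of_monoStableUnderProdMap,
    hW.1.monoStableUnderProdMap_of_pushoutProductStable⟩
end

section
/- Let i : Cat → n-Cat be the inclusion of categories into strict n-categories, with induced functor i_* : Psh(Δ) → Psh(Θ_n) (right adjoint to the restriction i*). Then a morphism f of simplicial sets is a trivial fibration (RLP against all monomorphisms) if and only if i_*(f) is a trivial fibration of presheaves on Θ_n. -/
open CategoryTheory CategoryTheory.Limits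

universe w v u

/-!
Restriction along any functor preserves monomorphisms, so the right adjoints `i_*` of `i^*` and
`i^*` of `t^*` preserve trivial fibrations. Since `i` is fully faithful, the unit of `t^* ⊣ i^*` is
an isomorphism, hence so is the counit `i^* i_* ⟶ 𝟭` of the adjoint triple `t^* ⊣ i^* ⊣ i_*`.
Thus `f ≅ i^* (i_* f)` as arrows, and `f` is a trivial fibration as soon as `i_* f` is one.
-/

namespace CategoryTheory.Adjunction

lemma isIso_whiskerLeft_unit (C : Type*) {D E : Type*} [Category* C] [Category* D]
    [Category* E] {F : D ⥤ E} {G : E ⥤ D} (adj : F ⊣ G) [IsIso adj.unit] :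
    IsIso (adj.whiskerLeft C).unit := by
  have (X : D ⥤ C) (d : D) : IsIso (((adj.whiskerLeft C).unit.app X).app d) := by
    simp only [whiskerLeft_unit_app_app]
    infer_instance
  have (X : D ⥤ C) : IsIso ((adj.whiskerLeft C).unit.app X) := NatIso.isIso_of_isIso_app _
  exact NatIso.isIso_of_isIso_app _

end CategoryTheory.Adjunction

namespace Paper

open CategoryTheory

variable {C : Type*} [Category* C] {D : Type*} [Category* D]

lemma IsTrivFib.of_arrow_iso {X Y X' Y' : C} {f : X ⟶ Y} {f' : X' ⟶ Y'}
    (e : Arrow.mk f ≅ Arrow.mk f') (hf : IsTrivFib f) : IsTrivFib f' := fun _ _ i hi =>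
  have := hf i hi
  HasLiftingProperty.of_arrow_iso_right i e

lemma IsTrivFib.map_of_adjunction {L : C ⥤ D} {R : D ⥤ C} (adj : L ⊣ R)
    [L.PreservesMonomorphisms] {X Y : D} {f : X ⟶ Y} (hf : IsTrivFib f) :
    IsTrivFib (R.map f) := fun _ _ i _ =>
  (adj.hasLiftingProperty_iff i f).mp (hf (L.map i) inferInstance)

theorem isTrivFib_iff_isTrivFib_map {L' : D ⥤ C} {L : C ⥤ D} {R : D ⥤ C}
    (adj' : L' ⊣ L) (adj : L ⊣ R) [L'.PreservesMonomorphisms] [L.PreservesMonomorphisms]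
    [IsIso adj.counit] {X Y : D} (f : X ⟶ Y) :
    IsTrivFib f ↔ IsTrivFib (R.map f) :=
  ⟨IsTrivFib.map_of_adjunction adj, fun hf => (hf.map_of_adjunction adj').of_arrow_iso
    (Arrow.isoMk (asIso (adj.counit.app X)) (asIso (adj.counit.app Y))
      (adj.counit_naturality f).symm)⟩

end Paper

open Paper CategoryTheory CategoryTheory.Limits in
/-- Abstract form of: for the inclusion `i : Δ = Θ₁ → Θₙ` (a fully faithful functor which
admits a left adjoint `t`, the truncation), a morphism `f` of simplicial sets is a trivial
fibration if and only if `i_*(f)` is a trivial fibration of presheaves on `Θₙ`, where `i_*`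
is the right adjoint of the restriction functor `i^*`. -/
theorem stmt5 {Θ : Type} [SmallCategory Θ]
    (i : SimplexCategory ⥤ Θ) [i.Full] [i.Faithful]
    (t : Θ ⥤ SimplexCategory) (adj : t ⊣ i)
    (iLowerStar : (SimplexCategoryᵒᵖ ⥤ Type) ⥤ (Θᵒᵖ ⥤ Type))
    (adj2 : (Functor.whiskeringLeft SimplexCategoryᵒᵖ Θᵒᵖ Type).obj i.op ⊣ iLowerStar)
    {X Y : SimplexCategoryᵒᵖ ⥤ Type} (f : X ⟶ Y) :
    IsTrivFib f ↔ IsTrivFib (iLowerStar.map f) := by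
  let tStarAdj := adj.op.whiskerLeft Type
  have := adj.op.isIso_whiskerLeft_unit Type
  have : IsIso adj2.counit :=
    (Adjunction.Triple.mk tStarAdj adj2).isIso_unit_iff_isIso_counit.mp this
  exact isTrivFib_iff_isTrivFib_map tStarAdj adj2 f
end
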